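/- arXiv:2511.19121 — 6 statements merged into one kernel-verified Lean document; each statement's English description precedes it below -/
import Mathlib

section
/- Let θ0, θ, x ∈ ℝ^d and let h0 : ℝ^d → ℝ satisfy the sign-alignment condition at x with respect to θ0. Then g(θ,h0)(x) ≤ g(θ0,h0)(x) and g(θ0,h0)(x) = |h0(x)|; that is, the true direction θ0 pointwise maximizes the ReLU-based maximum score function. -/
open scoped RealInnerProductSpace

/-- The "positive part" ReLU-based maximum score function
`g₊(θ,h)(x) = max(h(x) − max(−⟪x,θ⟫, 0), 0)`. -/
noncomputable def gplus {d : ℕ} (θ : EuclideanSpace ℝ (Fin d))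
    (h : EuclideanSpace ℝ (Fin d) → ℝ) (x : EuclideanSpace ℝ (Fin d)) : ℝ :=
  max (h x - max (-⟪x, θ⟫) 0) 0

/-- The "negative part" ReLU-based maximum score function
`g₋(θ,h)(x) = max(−h(x) − max(⟪x,θ⟫, 0), 0)`. -/
noncomputable def gminus {d : ℕ} (θ : EuclideanSpace ℝ (Fin d))
    (h : EuclideanSpace ℝ (Fin d) → ℝ) (x : EuclideanSpace ℝ (Fin d)) : ℝ :=
  max (-h x - max ⟪x, θ⟫ 0) 0

/-- The ReLU-based maximum score function `g(θ,h)(x) = g₊(θ,h)(x) + g₋(θ,h)(x)`. -/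
noncomputable def gRMS {d : ℕ} (θ : EuclideanSpace ℝ (Fin d))
    (h : EuclideanSpace ℝ (Fin d) → ℝ) (x : EuclideanSpace ℝ (Fin d)) : ℝ :=
  gplus θ h x + gminus θ h x

/-- `h0` satisfies the sign-alignment condition at `x` with respect to `θ0`:
`h0(x) > 0 ↔ ⟪x,θ0⟫ > 0` and `h0(x) < 0 ↔ ⟪x,θ0⟫ < 0`. -/
def SignAlign {d : ℕ} (θ0 : EuclideanSpace ℝ (Fin d))
    (h0 : EuclideanSpace ℝ (Fin d) → ℝ) (x : EuclideanSpace ℝ (Fin d)) : Prop :=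
  (0 < h0 x ↔ 0 < ⟪x, θ0⟫) ∧ (h0 x < 0 ↔ ⟪x, θ0⟫ < 0)

set_option maxHeartbeats 4000000 in
lemma rms_helper (a s s0 : ℝ) (h1 : 0 < a ↔ 0 < s0) (h2 : a < 0 ↔ s0 < 0) :
    max (a - max (-s) 0) 0 + max (-a - max s 0) 0 ≤
      max (a - max (-s0) 0) 0 + max (-a - max s0 0) 0 ∧
    max (a - max (-s0) 0) 0 + max (-a - max s0 0) 0 = |a| := by
  rcases lt_trichotomy a 0 with ha | ha | ha
  · have hs0 : s0 < 0 := h2.mp ha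
    simp only [max_def, abs]
    split_ifs <;> constructor <;> first | rfl | linarith
  · have hs1 : ¬ 0 < s0 := fun h => absurd (h1.mpr h) (by linarith)
    have hs2 : ¬ s0 < 0 := fun h => absurd (h2.mpr h) (by linarith)
    have hs0 : s0 = 0 := le_antisymm (not_lt.mp hs1) (not_lt.mp hs2)
    simp only [max_def, abs]
    split_ifs <;> constructor <;> first | rfl | linarith
  · have hs0 : 0 < s0 := h1.mp ha
    simp only [max_def, abs]
    split_ifs <;> constructor <;> first | rfl | linarith

/-- under the sign-alignment condition at `x`, the true direction `θ0`
pointwise maximizes the ReLU-based maximum score function and attains `|h0(x)|`. -/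
theorem rms_pointwise_max {d : ℕ} (θ0 θ x : EuclideanSpace ℝ (Fin d))
    (h0 : EuclideanSpace ℝ (Fin d) → ℝ) (hsa : SignAlign θ0 h0 x) :
    gRMS θ h0 x ≤ gRMS θ0 h0 x ∧ gRMS θ0 h0 x = |h0 x| := by
  obtain ⟨h1, h2⟩ := hsa
  exact rms_helper (h0 x) ⟪x, θ⟫ ⟪x, θ0⟫ h1 h2
end

section
/- Let μ be a measure on ℝ^d, θ0 ∈ ℝ^d, and let h0 : ℝ^d → ℝ be μ-integrable. Suppose h0 satisfies the sign-alignment condition at x with respect to θ0 for μ-almost every x. Then for every θ ∈ ℝ^d, ∫ g(θ,h0)(x) dμ(x) ≤ ∫ g(θ0,h0)(x) dμ(x) = ∫ |h0(x)| dμ(x); in particular θ0 maximizes the population ReLU-based maximum score criterion Q(θ) := ∫ g(θ,h0) dμ. -/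
open MeasureTheory
open scoped RealInnerProductSpace

lemma gRMS_le_abs {d : ℕ} (θ : EuclideanSpace ℝ (Fin d))
    (h : EuclideanSpace ℝ (Fin d) → ℝ) (x : EuclideanSpace ℝ (Fin d)) :
    gRMS θ h x ≤ |h x| := by
  unfold gRMS gplus gminus
  set a := h x with ha
  set t := ⟪x, θ⟫ with ht
  have h1 : max (a - max (-t) 0) 0 ≤ max a 0 :=
    max_le_max (sub_le_self a (le_max_right _ _)) le_rfl
  have h2 : max (-a - max t 0) 0 ≤ max (-a) 0 :=
    max_le_max (sub_le_self (-a) (le_max_right _ _)) le_rfl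
  have h3 : max a 0 + max (-a) 0 = |a| := by
    rcases abs_cases a with ⟨e, he⟩ | ⟨e, he⟩ <;> rw [e]
    · rw [max_eq_left he, max_eq_right (by linarith : -a ≤ 0)]; ring
    · rw [max_eq_right he.le, max_eq_left (by linarith : (0:ℝ) ≤ -a)]; ring
  linarith

lemma gRMS_eq_abs {d : ℕ} (θ0 : EuclideanSpace ℝ (Fin d))
    (h0 : EuclideanSpace ℝ (Fin d) → ℝ) (x : EuclideanSpace ℝ (Fin d))
    (hsa : SignAlign θ0 h0 x) : gRMS θ0 h0 x = |h0 x| := by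
  obtain ⟨h1, h2⟩ := hsa
  unfold gRMS gplus gminus
  rcases lt_trichotomy (h0 x) 0 with hc | hc | hc
  · have hipc := h2.mp hc
    rw [max_eq_left (by linarith : (0:ℝ) ≤ -⟪x,θ0⟫),
      max_eq_right (show h0 x - -⟪x,θ0⟫ ≤ 0 by linarith),
      max_eq_right hipc.le,
      max_eq_left (show (0:ℝ) ≤ -h0 x - 0 by linarith),
      abs_of_neg hc]
    ring
  · have hz : ⟪x, θ0⟫ = 0 := by
      by_contra hne
      rcases lt_or_gt_of_ne hne with hl | hl
      · exact absurd (h2.mpr hl) (by simp [hc])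
      · exact absurd (h1.mpr hl) (by simp [hc])
    simp [hc, hz]
  · have hipc := h1.mp hc
    rw [max_eq_right (by linarith : -⟪x,θ0⟫ ≤ 0),
      max_eq_left (show (0:ℝ) ≤ h0 x - 0 by linarith),
      max_eq_left hipc.le,
      max_eq_right (show -h0 x - ⟪x,θ0⟫ ≤ 0 by linarith),
      abs_of_pos hc]
    ring

lemma gRMS_nonneg {d : ℕ} (θ : EuclideanSpace ℝ (Fin d))
    (h : EuclideanSpace ℝ (Fin d) → ℝ) (x : EuclideanSpace ℝ (Fin d)) :
    0 ≤ gRMS θ h x :=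
  add_nonneg (le_max_right _ _) (le_max_right _ _)

lemma gRMS_integrable {d : ℕ} {μ : Measure (EuclideanSpace ℝ (Fin d))}
    (θ : EuclideanSpace ℝ (Fin d)) {h : EuclideanSpace ℝ (Fin d) → ℝ}
    (hint : Integrable h μ) : Integrable (gRMS θ h) μ := by
  refine hint.abs.mono' ?_ ?_
  · have hm := hint.aestronglyMeasurable
    have c1 : Continuous fun x : EuclideanSpace ℝ (Fin d) => max (-⟪x, θ⟫) 0 :=
      ((continuous_id.inner continuous_const).neg).max continuous_const
    have c2 : Continuous fun x : EuclideanSpace ℝ (Fin d) => max ⟪x, θ⟫ 0 :=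
      (continuous_id.inner continuous_const).max continuous_const
    unfold gRMS gplus gminus
    exact ((hm.sub c1.aestronglyMeasurable).sup aestronglyMeasurable_const).add
      ((hm.neg.sub c2.aestronglyMeasurable).sup aestronglyMeasurable_const)
  · filter_upwards with x
    rw [Real.norm_eq_abs, abs_of_nonneg (gRMS_nonneg θ h x)]
    exact gRMS_le_abs θ h x

/-- `θ0` maximizes the population ReLU-based maximum score criterion
`Q(θ) = ∫ g(θ,h0) dμ`, whose maximal value is `∫ |h0| dμ`. -/
theorem rms_population_max {d : ℕ} (μ : Measure (EuclideanSpace ℝ (Fin d)))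
    (θ0 : EuclideanSpace ℝ (Fin d)) (h0 : EuclideanSpace ℝ (Fin d) → ℝ)
    (hint : Integrable h0 μ) (hsa : ∀ᵐ x ∂μ, SignAlign θ0 h0 x) :
    ∀ θ : EuclideanSpace ℝ (Fin d),
      (∫ x, gRMS θ h0 x ∂μ) ≤ (∫ x, gRMS θ0 h0 x ∂μ) ∧
      (∫ x, gRMS θ0 h0 x ∂μ) = ∫ x, |h0 x| ∂μ := by
  intro θ
  have heq : (∫ x, gRMS θ0 h0 x ∂μ) = ∫ x, |h0 x| ∂μ :=
    integral_congr_ae (hsa.mono fun x hx => gRMS_eq_abs θ0 h0 x hx)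
  refine ⟨?_, heq⟩
  rw [heq]
  exact integral_mono (gRMS_integrable θ hint) hint.abs (gRMS_le_abs θ h0)
end

section
/- Let θ0, θ, x ∈ ℝ^d and let h0 : ℝ^d → ℝ satisfy the sign-alignment condition at x with respect to θ0. Then |g(θ,h0)(x) − g(θ0,h0)(x)| ≤ (if |⟪x,θ0⟫| ≤ ‖x‖·‖θ − θ0‖ then ‖x‖·‖θ − θ0‖ else 0); in particular, g(θ,h0)(x) = g(θ0,h0)(x) whenever |⟪x,θ0⟫| > ‖x‖·‖θ − θ0‖. -/
open scoped RealInnerProductSpace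

private lemma key_gRMS (A B H C : ℝ) (hC : |B - A| ≤ C)
    (h1 : 0 < H ↔ 0 < A) (h2 : H < 0 ↔ A < 0) :
    (|(max (H - max (-B) 0) 0 + max (-H - max B 0) 0)
        - (max (H - max (-A) 0) 0 + max (-H - max A 0) 0)| ≤ if |A| ≤ C then C else 0) ∧
      (C < |A| →
        max (H - max (-B) 0) 0 + max (-H - max B 0) 0
          = max (H - max (-A) 0) 0 + max (-H - max A 0) 0) := by
  rw [abs_le] at hC
  have hC0 : 0 ≤ C := by linarith [hC.1, hC.2]
  rcases lt_trichotomy A 0 with hA0 | hA0 | hA0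
  · -- A < 0, so H < 0
    have hH : H < 0 := h2.mpr hA0
    have e1 : max (-A) 0 = -A := max_eq_left (by linarith)
    have e2 : max A 0 = 0 := max_eq_right hA0.le
    rw [e1, e2]
    have e3 : max (H - -A) 0 = 0 := max_eq_right (by linarith)
    have e4 : max (H - max (-B) 0) 0 = 0 :=
      max_eq_right (by have := le_max_right (-B) 0; linarith)
    have e5 : max (-H - 0) 0 = -H := by rw [sub_zero]; exact max_eq_left (by linarith)
    rw [e3, e4, e5, abs_of_neg hA0]
    have hM0 : 0 ≤ max B 0 := le_max_right _ _
    constructor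
    · split_ifs with hband
      · have hMC : max B 0 ≤ C := max_le (by linarith [hC.2]) hC0
        rcases le_total (-H - max B 0) 0 with h | h
        · rw [max_eq_right h, abs_le]; constructor <;> linarith
        · rw [max_eq_left h, abs_le]; constructor <;> linarith
      · push_neg at hband
        have : max B 0 = 0 := max_eq_right (by linarith [hC.2])
        rw [this, e5]; simp
    · intro hband
      have : max B 0 = 0 := max_eq_right (by linarith [hC.2])
      rw [this, e5]
  · -- A = 0, so H = 0
    have hH : H = 0 := by
      by_contra h
      rcases lt_or_gt_of_ne h with h | h
      · exact absurd (h2.mp h) (by simp [hA0])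
      · exact absurd (h1.mp h) (by simp [hA0])
    subst hA0 hH
    simp only [abs_zero, hC0, if_pos, neg_zero]
    have e1 : max (0 - max (-B) 0) 0 = 0 :=
      max_eq_right (by have := le_max_right (-B) 0; linarith)
    have e2 : max (0 - max B 0) 0 = 0 :=
      max_eq_right (by have := le_max_right B 0; linarith)
    rw [e1, e2]
    norm_num [hC0]
  · -- A > 0, so H > 0
    have hH : 0 < H := h1.mpr hA0
    have e1 : max (-A) 0 = 0 := max_eq_right (by linarith)
    have e2 : max A 0 = A := max_eq_left hA0.le
    rw [e1, e2]
    have e3 : max (H - 0) 0 = H := by rw [sub_zero]; exact max_eq_left hH.le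
    have e4 : max (-H - A) 0 = 0 := max_eq_right (by linarith)
    have e5 : max (-H - max B 0) 0 = 0 :=
      max_eq_right (by have := le_max_right B 0; linarith)
    rw [e3, e4, e5, abs_of_pos hA0]
    have hM0 : 0 ≤ max (-B) 0 := le_max_right _ _
    constructor
    · split_ifs with hband
      · have hMC : max (-B) 0 ≤ C := max_le (by linarith [hC.1]) hC0
        rcases le_total (H - max (-B) 0) 0 with h | h
        · rw [max_eq_right h, abs_le]; constructor <;> linarith
        · rw [max_eq_left h, abs_le]; constructor <;> linarith
      · push_neg at hband
        have : max (-B) 0 = 0 := max_eq_right (by linarith [hC.1])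
        rw [this, sub_zero, max_eq_left hH.le]; simp
    · intro hband
      have : max (-B) 0 = 0 := max_eq_right (by linarith [hC.1])
      rw [this, sub_zero, max_eq_left hH.le]


/-- under sign alignment at `x`, the deviation of the ReLU-based maximum
score function is bounded by `‖x‖·‖θ−θ0‖` on the band `{|⟪x,θ0⟫| ≤ ‖x‖·‖θ−θ0‖}` and
vanishes off that band. -/
theorem gRMS_band_bound {d : ℕ} (θ0 θ x : EuclideanSpace ℝ (Fin d))
    (h0 : EuclideanSpace ℝ (Fin d) → ℝ) (hsa : SignAlign θ0 h0 x) :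
    (|gRMS θ h0 x - gRMS θ0 h0 x|
        ≤ if |⟪x, θ0⟫| ≤ ‖x‖ * ‖θ - θ0‖ then ‖x‖ * ‖θ - θ0‖ else 0) ∧
      (‖x‖ * ‖θ - θ0‖ < |⟪x, θ0⟫| → gRMS θ h0 x = gRMS θ0 h0 x) := by
  obtain ⟨h1, h2⟩ := hsa
  have hC : |⟪x, θ⟫ - ⟪x, θ0⟫| ≤ ‖x‖ * ‖θ - θ0‖ := by
    rw [← inner_sub_right]
    exact abs_real_inner_le_norm x (θ - θ0)
  simp only [gRMS, gplus, gminus]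
  exact key_gRMS ⟪x, θ0⟫ ⟪x, θ⟫ (h0 x) (‖x‖ * ‖θ - θ0‖) hC h1 h2
end

section
/- For every x, θ, θ0 ∈ ℝ^d and all functions h, h0 : ℝ^d → ℝ, the difference-in-differences bound |g₊(θ,h)(x) − g₊(θ0,h)(x) − g₊(θ,h0)(x) + g₊(θ0,h0)(x)| ≤ 2·|⟪x, θ − θ0⟫| holds. -/
open scoped RealInnerProductSpace

/-- difference-in-differences bound
`|g₊(θ,h)(x) − g₊(θ0,h)(x) − g₊(θ,h0)(x) + g₊(θ0,h0)(x)| ≤ 2·|⟪x, θ − θ0⟫|`. -/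
theorem gplus_did_bound {d : ℕ} (x θ θ0 : EuclideanSpace ℝ (Fin d))
    (h h0 : EuclideanSpace ℝ (Fin d) → ℝ) :
    |gplus θ h x - gplus θ0 h x - gplus θ h0 x + gplus θ0 h0 x|
      ≤ 2 * |⟪x, θ - θ0⟫| := by
  have key : ∀ h' : EuclideanSpace ℝ (Fin d) → ℝ,
      |gplus θ h' x - gplus θ0 h' x| ≤ |⟪x, θ - θ0⟫| := by
    intro h'
    have h1 : |gplus θ h' x - gplus θ0 h' x|
        ≤ |(h' x - max (-⟪x, θ⟫) 0) - (h' x - max (-⟪x, θ0⟫) 0)| :=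
      abs_max_sub_max_le_abs _ _ 0
    have h2 : |(h' x - max (-⟪x, θ⟫) 0) - (h' x - max (-⟪x, θ0⟫) 0)|
        = |max (-⟪x, θ0⟫) 0 - max (-⟪x, θ⟫) 0| := by ring_nf
    have h3 : |max (-⟪x, θ0⟫) 0 - max (-⟪x, θ⟫) 0| ≤ |(-⟪x, θ0⟫) - (-⟪x, θ⟫)| :=
      abs_max_sub_max_le_abs _ _ 0
    have h4 : |(-⟪x, θ0⟫) - (-⟪x, θ⟫)| = |⟪x, θ - θ0⟫| := by
      rw [inner_sub_right, neg_sub_neg]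
    calc |gplus θ h' x - gplus θ0 h' x| ≤ _ := h1
      _ = _ := h2
      _ ≤ _ := h3
      _ = _ := h4
  calc |gplus θ h x - gplus θ0 h x - gplus θ h0 x + gplus θ0 h0 x|
      = |(gplus θ h x - gplus θ0 h x) - (gplus θ h0 x - gplus θ0 h0 x)| := by ring_nf
    _ ≤ |gplus θ h x - gplus θ0 h x| + |gplus θ h0 x - gplus θ0 h0 x| := abs_sub _ _
    _ ≤ |⟪x, θ - θ0⟫| + |⟪x, θ - θ0⟫| := add_le_add (key h) (key h0)
    _ = 2 * |⟪x, θ - θ0⟫| := by ring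
end

section
/- Let d ≥ 1, let θ0 ∈ ℝ^d be a unit vector, and let R ≥ 0, δ ≥ 0. Then the Lebesgue measure of the slab { x ∈ ℝ^d : ‖x‖ ≤ R and |⟪x,θ0⟫| ≤ δ } is at most 2δ·V_{d−1}·R^{d−1}, where V_{d−1} denotes the Lebesgue volume of the closed unit ball of ℝ^{d−1} (with V_0 := 1). -/
/-!
An orthonormal basis with first vector `θ0` turns the slab into
`{y | ‖y‖ ≤ R ∧ |y 0| ≤ δ}` without changing volumes. Splitting `y` into its first coordinate
and the remaining `d - 1` ones is measure preserving onto `ℝ × ℝ^{d-1}`, and maps this set into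
`[-δ, δ] × closedBall 0 R`, whose volume is `2δ · R^{d-1} · V_{d-1}` by scaling.
-/

open MeasureTheory
open scoped RealInnerProductSpace

namespace EuclideanSpace

variable {n : ℕ}

theorem norm_sq_eq_apply_zero_sq_add_norm_tail_sq (y : EuclideanSpace ℝ (Fin (n + 1))) :
    ‖y‖ ^ 2 = y 0 ^ 2 + ‖WithLp.toLp 2 (Fin.tail y.ofLp)‖ ^ 2 := by
  simp only [EuclideanSpace.norm_sq_eq, Fin.sum_univ_succ, Real.norm_eq_abs, sq_abs]
  rfl

theorem measurePreserving_apply_zero_prod_tail :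
    MeasurePreserving (fun y : EuclideanSpace ℝ (Fin (n + 1)) ↦
      (y 0, WithLp.toLp 2 (Fin.tail y.ofLp))) volume (volume.prod volume) :=
  ((MeasurePreserving.id volume).prod (PiLp.volume_preserving_toLp (Fin n))).comp
    ((measurePreserving_piFinSuccAbove (fun _ ↦ volume) 0).comp (PiLp.volume_preserving_ofLp _))

theorem volume_setOf_norm_le_and_abs_apply_zero_le (R δ : ℝ) :
    volume {y : EuclideanSpace ℝ (Fin (n + 1)) | ‖y‖ ≤ R ∧ |y 0| ≤ δ}
      ≤ ENNReal.ofReal (2 * δ) * volume (Metric.closedBall (0 : EuclideanSpace ℝ (Fin n)) R) := by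
  have hsub : {y : EuclideanSpace ℝ (Fin (n + 1)) | ‖y‖ ≤ R ∧ |y 0| ≤ δ} ⊆
      (fun y ↦ (y 0, WithLp.toLp 2 (Fin.tail y.ofLp))) ⁻¹'
        (Set.Icc (-δ) δ ×ˢ Metric.closedBall 0 R) := by
    rintro y ⟨hnorm, hcoord⟩
    refine ⟨abs_le.mp hcoord, ?_⟩
    rw [mem_closedBall_zero_iff]
    refine le_trans ?_ hnorm
    refine (pow_le_pow_iff_left₀ (norm_nonneg _) (norm_nonneg y) two_ne_zero).mp ?_
    rw [norm_sq_eq_apply_zero_sq_add_norm_tail_sq y]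
    exact le_add_of_nonneg_left (sq_nonneg _)
  calc _ ≤ _ := measure_mono hsub
    _ = volume (Set.Icc (-δ) δ) * volume (Metric.closedBall (0 : EuclideanSpace ℝ (Fin n)) R) := by
      rw [measurePreserving_apply_zero_prod_tail.measure_preimage
        (measurableSet_Icc.prod Metric.isClosed_closedBall.measurableSet).nullMeasurableSet,
        Measure.prod_prod]
    _ = _ := by rw [Real.volume_Icc, sub_neg_eq_add, two_mul]

end EuclideanSpace

section Slab

variable {E : Type*} [NormedAddCommGroup E] [InnerProductSpace ℝ E] {n : ℕ}

theorem exists_orthonormalBasis_apply_zero_eq (hE : Module.finrank ℝ E = n + 1) {θ : E}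
    (hθ : ‖θ‖ = 1) : ∃ b : OrthonormalBasis (Fin (n + 1)) ℝ E, b 0 = θ := by
  have : FiniteDimensional ℝ E := Module.finite_of_finrank_eq_succ hE
  have hθ_orthonormal : Orthonormal ℝ (({0} : Set (Fin (n + 1))).domRestrict fun _ ↦ θ) := by
    rw [orthonormal_iff_ite]
    intro i j
    obtain rfl := Subsingleton.elim i j
    simp [hθ]
  obtain ⟨b, hb⟩ :=
    hθ_orthonormal.exists_orthonormalBasis_extension_of_card_eq (by simpa using hE)
  exact ⟨b, hb 0 rfl⟩

theorem volume_setOf_norm_le_and_abs_inner_le [FiniteDimensional ℝ E] [MeasurableSpace E]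
    [BorelSpace E] (hE : Module.finrank ℝ E = n + 1) {θ : E} (hθ : ‖θ‖ = 1) (R δ : ℝ) :
    volume {x : E | ‖x‖ ≤ R ∧ |⟪x, θ⟫| ≤ δ}
      ≤ ENNReal.ofReal (2 * δ) * volume (Metric.closedBall (0 : EuclideanSpace ℝ (Fin n)) R) := by
  obtain ⟨b, hb⟩ := exists_orthonormalBasis_apply_zero_eq hE hθ
  have hslab : {x : E | ‖x‖ ≤ R ∧ |⟪x, θ⟫| ≤ δ} =
      b.repr ⁻¹' {y | ‖y‖ ≤ R ∧ |y 0| ≤ δ} := by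
    ext x
    simp [b.repr_apply_apply, hb, real_inner_comm]
  rw [hslab]
  exact (b.measurePreserving_measurableEquiv.measure_preimage_equiv _).trans_le
    (EuclideanSpace.volume_setOf_norm_le_and_abs_apply_zero_le R δ)

end Slab

theorem slab_volume_bound_general {d : ℕ} (hd : 1 ≤ d)
    (θ0 : EuclideanSpace ℝ (Fin d)) (hθ0 : ‖θ0‖ = 1)
    (R δ : ℝ) (hR : 0 ≤ R) :
    volume {x : EuclideanSpace ℝ (Fin d) | ‖x‖ ≤ R ∧ |⟪x, θ0⟫| ≤ δ}
      ≤ ENNReal.ofReal (2 * δ)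
          * volume (Metric.closedBall (0 : EuclideanSpace ℝ (Fin (d - 1))) 1)
          * ENNReal.ofReal (R ^ (d - 1)) := by
  obtain ⟨n, rfl⟩ : ∃ n, d = n + 1 := ⟨d - 1, by omega⟩
  calc _ ≤ ENNReal.ofReal (2 * δ) * volume (Metric.closedBall (0 : EuclideanSpace ℝ (Fin n)) R) :=
        volume_setOf_norm_le_and_abs_inner_le (by simp) hθ0 R δ
    _ = _ := by
      rw [Measure.addHaar_closedBall' _ _ hR, finrank_euclideanSpace_fin, Nat.add_sub_cancel]
      ring

/-- the Lebesgue measure of the slab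
`{x ∈ ℝ^d : ‖x‖ ≤ R, |⟪x,θ0⟫| ≤ δ}` is at most `2δ·V_{d−1}·R^{d−1}`, where `V_{d−1}`
is the Lebesgue volume of the closed unit ball of `ℝ^{d−1}` (interpreted as `1` when
`d − 1 = 0`). -/
theorem slab_volume_bound {d : ℕ} (hd : 1 ≤ d)
    (θ0 : EuclideanSpace ℝ (Fin d)) (hθ0 : ‖θ0‖ = 1)
    (R δ : ℝ) (hR : 0 ≤ R) (hδ : 0 ≤ δ) :
    volume {x : EuclideanSpace ℝ (Fin d) | ‖x‖ ≤ R ∧ |⟪x, θ0⟫| ≤ δ}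
      ≤ ENNReal.ofReal (2 * δ)
          * volume (Metric.closedBall (0 : EuclideanSpace ℝ (Fin (d - 1))) 1)
          * ENNReal.ofReal (R ^ (d - 1)) :=
  slab_volume_bound_general hd θ0 hθ0 R δ hR
end

section
/- Let d ≥ 1 and let θ0 ∈ ℝ^d with ‖θ0‖ = 1. Let μ be a measure on ℝ^d such that every nonempty open subset of the open unit ball of ℝ^d has strictly positive μ-measure, and let h0 : ℝ^d → ℝ be μ-integrable and satisfy the sign-alignment condition at every x ∈ ℝ^d with respect to θ0. Then θ0 is the unique maximizer of the population ReLU-based maximum score criterion on the unit sphere: for every θ ∈ ℝ^d with ‖θ‖ = 1 and θ ≠ θ0, ∫ g(θ,h0)(x) dμ(x) < ∫ g(θ0,h0)(x) dμ(x). -/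
open MeasureTheory
open scoped RealInnerProductSpace

/-- point identification. If `μ` gives positive mass to every nonempty
open subset of the open unit ball and `h0` satisfies sign alignment everywhere with
respect to the unit vector `θ0`, then `θ0` is the unique maximizer of the population
ReLU-based maximum score criterion over the unit sphere. -/
theorem rms_unique_maximizer {d : ℕ} (hd : 1 ≤ d)
    (θ0 : EuclideanSpace ℝ (Fin d)) (hθ0 : ‖θ0‖ = 1)
    (μ : Measure (EuclideanSpace ℝ (Fin d)))
    (hμ : ∀ U : Set (EuclideanSpace ℝ (Fin d)),
      IsOpen U → U ⊆ Metric.ball 0 1 → U.Nonempty → 0 < μ U)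
    (h0 : EuclideanSpace ℝ (Fin d) → ℝ) (hint : Integrable h0 μ)
    (hsa : ∀ x : EuclideanSpace ℝ (Fin d), SignAlign θ0 h0 x) :
    ∀ θ : EuclideanSpace ℝ (Fin d), ‖θ‖ = 1 → θ ≠ θ0 →
      (∫ x, gRMS θ h0 x ∂μ) < ∫ x, gRMS θ0 h0 x ∂μ := by
  intro θ hθ hne
  -- g at θ0 equals |h0|
  have key0 : ∀ x, gRMS θ0 h0 x = |h0 x| := by
    intro x
    obtain ⟨h1, h2⟩ := hsa x
    rcases lt_trichotomy (⟪x, θ0⟫) 0 with hip | hip | hip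
    · have hh : h0 x < 0 := h2.mpr hip
      have e1 : max (-⟪x, θ0⟫) 0 = -⟪x, θ0⟫ := max_eq_left (by linarith)
      have e2 : max ⟪x, θ0⟫ 0 = 0 := max_eq_right hip.le
      simp only [gRMS, gplus, gminus, e1, e2, sub_zero]
      rw [max_eq_right (by linarith), max_eq_left (by linarith), abs_of_neg hh]
      ring
    · have hz1 : ¬ 0 < h0 x := fun h => by simpa [hip] using h1.mp h
      have hz2 : ¬ h0 x < 0 := fun h => by simpa [hip] using h2.mp h
      have hh : h0 x = 0 := le_antisymm (not_lt.mp hz1) (not_lt.mp hz2)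
      simp [gRMS, gplus, gminus, hip, hh]
    · have hh : 0 < h0 x := h1.mpr hip
      have e1 : max (-⟪x, θ0⟫) 0 = 0 := max_eq_right (by linarith)
      have e2 : max ⟪x, θ0⟫ 0 = ⟪x, θ0⟫ := max_eq_left hip.le
      simp only [gRMS, gplus, gminus, e1, e2, sub_zero]
      rw [max_eq_left hh.le, max_eq_right (by linarith), abs_of_pos hh]
      ring
  -- g at any θ is ≤ |h0|
  have key_le : ∀ η x, gRMS η h0 x ≤ |h0 x| := by
    intro η x
    have habs : max (h0 x) 0 + max (-h0 x) 0 = |h0 x| :=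
      max_zero_add_max_neg_zero_eq_abs_self (h0 x)
    have l1 : gplus η h0 x ≤ max (h0 x) 0 :=
      max_le_max (sub_le_self _ (le_max_right _ _)) le_rfl
    have l2 : gminus η h0 x ≤ max (-h0 x) 0 :=
      max_le_max (sub_le_self _ (le_max_right _ _)) le_rfl
    calc gRMS η h0 x ≤ max (h0 x) 0 + max (-h0 x) 0 := add_le_add l1 l2
      _ = |h0 x| := habs
  have gnonneg : ∀ η x, 0 ≤ gRMS η h0 x :=
    fun η x => add_nonneg (le_max_right _ _) (le_max_right _ _)
  -- integrability
  have int_g : ∀ η : EuclideanSpace ℝ (Fin d), Integrable (gRMS η h0) μ := by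
    intro η
    have hc : Continuous fun x : EuclideanSpace ℝ (Fin d) => ⟪x, η⟫ :=
      continuous_id.inner continuous_const
    have h0m := hint.aestronglyMeasurable
    have hm : AEStronglyMeasurable (gRMS η h0) μ := by
      rw [aestronglyMeasurable_iff_aemeasurable]
      have h0a : AEMeasurable h0 μ := hint.aemeasurable
      have hca : AEMeasurable (fun x : EuclideanSpace ℝ (Fin d) => ⟪x, η⟫) μ :=
        hc.aemeasurable
      exact ((h0a.sub ((hca.neg.max aemeasurable_const))).max aemeasurable_const).add
        ((h0a.neg.sub (hca.max aemeasurable_const)).max aemeasurable_const)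
    refine Integrable.mono' hint.abs hm ?_
    filter_upwards with x
    rw [Real.norm_eq_abs, abs_of_nonneg (gnonneg η x)]
    exact key_le η x
  -- the open set where strict inequality holds
  set U : Set (EuclideanSpace ℝ (Fin d)) :=
    {x | 0 < ⟪x, θ0⟫} ∩ {x | ⟪x, θ⟫ < 0} ∩ Metric.ball 0 1 with hU
  have hc0 : Continuous fun x : EuclideanSpace ℝ (Fin d) => ⟪x, θ0⟫ :=
    continuous_id.inner continuous_const
  have hcθ : Continuous fun x : EuclideanSpace ℝ (Fin d) => ⟪x, θ⟫ :=
    continuous_id.inner continuous_const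
  have hUopen : IsOpen U :=
    (((isOpen_lt continuous_const hc0).inter (isOpen_lt hcθ continuous_const)).inter
      Metric.isOpen_ball)
  have hUsub : U ⊆ Metric.ball 0 1 := fun x hx => hx.2
  have hUne : U.Nonempty := by
    refine ⟨(4 : ℝ)⁻¹ • (θ0 - θ), ?_, ?_⟩
    · have hle : ⟪θ, θ0⟫ ≤ 1 := by
        have := real_inner_le_norm θ θ0
        rwa [hθ, hθ0, one_mul] at this
      have hlt : ⟪θ, θ0⟫ < 1 := lt_of_le_of_ne hle
        (fun h => hne ((inner_eq_one_iff_of_norm_eq_one hθ hθ0).mp h))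
      constructor
      · show 0 < ⟪(4 : ℝ)⁻¹ • (θ0 - θ), θ0⟫
        rw [real_inner_smul_left, inner_sub_left, real_inner_self_eq_norm_sq, hθ0]
        nlinarith
      · show ⟪(4 : ℝ)⁻¹ • (θ0 - θ), θ⟫ < 0
        rw [real_inner_smul_left, inner_sub_left, real_inner_self_eq_norm_sq, hθ]
        have : ⟪θ0, θ⟫ < 1 := by rwa [real_inner_comm] at hlt
        nlinarith
    · rw [Metric.mem_ball, dist_zero_right, norm_smul]
      have : ‖θ0 - θ‖ ≤ 2 := by
        calc ‖θ0 - θ‖ ≤ ‖θ0‖ + ‖θ‖ := norm_sub_le _ _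
          _ = 2 := by rw [hθ0, hθ]; norm_num
      rw [Real.norm_eq_abs, abs_of_pos (by norm_num : (0:ℝ) < (4:ℝ)⁻¹)]
      nlinarith
  -- strict inequality on U
  have hstrict : ∀ x ∈ U, gRMS θ h0 x < gRMS θ0 h0 x := by
    intro x hx
    obtain ⟨⟨hx1, hx2⟩, _⟩ := hx
    have hip0 : 0 < ⟪x, θ0⟫ := hx1
    have hipθ : ⟪x, θ⟫ < 0 := hx2
    have hh : 0 < h0 x := (hsa x).1.mpr hip0
    rw [key0 x, abs_of_pos hh]
    have e1 : max (-⟪x, θ⟫) 0 = -⟪x, θ⟫ := max_eq_left (by linarith)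
    have e2 : max ⟪x, θ⟫ 0 = 0 := max_eq_right hipθ.le
    have g1 : gplus θ h0 x < h0 x := by
      rw [gplus, e1]
      exact max_lt (by linarith) hh
    have g2 : gminus θ h0 x = 0 := by
      rw [gminus, e2]
      exact max_eq_right (by linarith)
    rw [gRMS, g2]
    linarith
  -- conclude
  have hint0 : Integrable (gRMS θ0 h0) μ := int_g θ0
  have hintθ : Integrable (gRMS θ h0) μ := int_g θ
  have hsub : Integrable (fun x => gRMS θ0 h0 x - gRMS θ h0 x) μ := hint0.sub hintθ
  have hpos : 0 < ∫ x, (gRMS θ0 h0 x - gRMS θ h0 x) ∂μ := by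
    rw [integral_pos_iff_support_of_nonneg_ae ?_ hsub]
    · refine lt_of_lt_of_le (hμ U hUopen hUsub hUne) (measure_mono ?_)
      intro x hx
      exact (sub_pos.mpr (hstrict x hx)).ne'
    · filter_upwards with x
      have : gRMS θ h0 x ≤ gRMS θ0 h0 x := by rw [key0 x]; exact key_le θ x
      simpa using sub_nonneg.mpr this
  rw [integral_sub hint0 hintθ] at hpos
  linarith
end
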